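/- (Basic Perturbation Lemma) Let (α, β, η) : (C, ∂) → (C', ∂') be a reduction of chain complexes and let δ be a perturbation of ∂ such that the degree −zero operator ηδ is pointwise nilpotent (for every c ∈ C there is i with (ηδ)^i(c) = 0). Define φ = Σ_{i≥0} (−1)^i (ηδ)^i and ψ = Σ_{i≥0} (−1)^i (δη)^i (finite sums pointwise). Then δ' = α δ φ β is a perturbation of ∂', and (αψ, φβ, φη) is a reduction from (C, ∂ + δ) to (C', ∂' + δ'). -/

import Mathlib

/-- A non-negatively graded chain complex of abelian groups. -/
structure ChCx where
  X : ℕ → Type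
  ab : ∀ n, AddCommGroup (X n)
  d : ∀ n, X (n + 1) →+ X n
  dd : ∀ n (c : X (n + 2)), d n (d (n + 1) c) = 0

attribute [instance] ChCx.ab

/-- A chain map between chain complexes. -/
structure ChMap (C C' : ChCx) where
  f : ∀ n, C.X n →+ C'.X n
  comm : ∀ n (c : C.X (n + 1)), f n (C.d n c) = C'.d n (f (n + 1) c)

/-- A reduction `(α, β, η) : C ⇒ C'`. -/
structure Reduction (C C' : ChCx) where
  α : ChMap C C'
  β : ChMap C' C
  η : ∀ n, C.X n →+ C.X (n + 1)
  ηβ : ∀ n (c : C'.X n), η n (β.f n c) = 0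
  αη : ∀ n (c : C.X n), α.f (n + 1) (η n c) = 0
  αβ : ∀ n (c : C'.X n), α.f n (β.f n c) = c
  ηη : ∀ n (c : C.X n), η (n + 1) (η n c) = 0
  hmt0 : ∀ c : C.X 0, C.d 0 (η 0 c) = c - β.f 0 (α.f 0 c)
  hmt : ∀ n (c : C.X (n + 1)),
    C.d (n + 1) (η (n + 1) c) + η n (C.d n c) = c - β.f (n + 1) (α.f (n + 1) c)

/-!
Local nilpotence of `ηδ`, hence of `δη`, makes `1 + ηδ` and `1 + δη` invertible: their inverses
`φ` and `ψ` are the (pointwise finite) alternating geometric series, and they intertwine `δ` and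
`η`: `δφ = ψδ`, `φη = ηψ`. Substituting `βα = 1 - ∂η - η∂` and `∂δ + δ∂ + δδ = 0` gives the two
identities `φβαδφ = (∂ + δ)φ - φ∂` and `δφβαψ = ψ(∂ + δ) - ∂ψ`; they say that `φβ` and `αψ` are
chain maps for the new differentials, and they give the new homotopy relation. Finally `∂' + δ'`
squares to zero because `αψ ∘ φβ = 1`, so `(C', ∂' + δ')` is a retract of `(C, ∂ + δ)`.
-/

namespace AddMonoidHom

variable {M N : Type*} [AddCommGroup M] [AddCommGroup N]

def IsLocallyNilpotent (e : M →+ M) : Prop := ∀ c, ∃ i, (⇑e)^[i] c = 0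

theorem IsLocallyNilpotent.comp_comm {f : N →+ M} {g : M →+ N}
    (h : (f.comp g).IsLocallyNilpotent) : (g.comp f).IsLocallyNilpotent := fun c => by
  obtain ⟨i, hi⟩ := h (f c)
  have hg : Function.Semiconj g (f.comp g) (g.comp f) := fun _ => rfl
  exact ⟨i + 1, by rw [Function.iterate_succ_apply, comp_apply, ← hg.iterate_right, hi, map_zero]⟩

def altGeomSum (e : M →+ M) (m : ℕ) (c : M) : M :=
  ∑ i ∈ Finset.range m, ((-1 : ℤ) ^ i) • (⇑e)^[i] c

theorem altGeomSum_add_apply_altGeomSum (e : M →+ M) (m : ℕ) (c : M) :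
    e.altGeomSum m c + e (e.altGeomSum m c) = c - ((-1 : ℤ) ^ m) • (⇑e)^[m] c := by
  induction m with
  | zero => simp [altGeomSum]
  | succ m ih =>
    rw [altGeomSum, Finset.sum_range_succ, ← altGeomSum, map_add, add_add_add_comm, ih, map_zsmul,
      ← Function.iterate_succ_apply' e, pow_succ, mul_neg_one, neg_smul]
    abel

variable {e : M →+ M}

theorem IsLocallyNilpotent.eq_zero_of_add_apply_eq_zero (he : e.IsLocallyNilpotent) {c : M}
    (h : c + e c = 0) : c = 0 := by
  have hc : e c = -c := eq_neg_of_add_eq_zero_right h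
  have hiter : ∀ j, (⇑e)^[j] c = ((-1 : ℤ) ^ j) • c := by
    intro j
    induction j with
    | zero => simp
    | succ j ih =>
      rw [Function.iterate_succ_apply', ih, map_zsmul, hc, pow_succ, mul_neg_one, neg_smul,
        smul_neg]
  obtain ⟨k, hk⟩ := he c
  rwa [hiter, (isUnit_neg_one.pow k).smul_eq_zero] at hk

theorem IsLocallyNilpotent.bijective_id_add (he : e.IsLocallyNilpotent) :
    Function.Bijective (AddMonoidHom.id M + e) := by
  refine ⟨(injective_iff_map_eq_zero _).2 fun c => he.eq_zero_of_add_apply_eq_zero, fun c => ?_⟩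
  obtain ⟨k, hk⟩ := he c
  refine ⟨e.altGeomSum k c, ?_⟩
  rw [add_apply, id_apply, altGeomSum_add_apply_altGeomSum, hk, smul_zero, sub_zero]

noncomputable def oneAddInv (e : M →+ M) (he : e.IsLocallyNilpotent) : M →+ M :=
  (AddEquiv.ofBijective _ he.bijective_id_add).symm.toAddMonoidHom

theorem oneAddInv_eq_iff (he : e.IsLocallyNilpotent) {c x : M} :
    e.oneAddInv he c = x ↔ x + e x = c :=
  (AddEquiv.symm_apply_eq _).trans eq_comm

theorem oneAddInv_add_apply (he : e.IsLocallyNilpotent) (c : M) :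
    e.oneAddInv he c + e (e.oneAddInv he c) = c :=
  (oneAddInv_eq_iff he).1 rfl

theorem oneAddInv_add_oneAddInv_apply (he : e.IsLocallyNilpotent) (c : M) :
    e.oneAddInv he c + e.oneAddInv he (e c) = c := by
  rw [← map_add, oneAddInv_eq_iff]

theorem oneAddInv_apply_of_apply_eq_zero (he : e.IsLocallyNilpotent) {c : M} (hc : e c = 0) :
    e.oneAddInv he c = c := by
  rw [oneAddInv_eq_iff, hc, add_zero]

theorem apply_oneAddInv_of_comp_eq_zero (he : e.IsLocallyNilpotent) {g : M →+ N}
    (hg : ∀ x, g (e x) = 0) (c : M) : g (e.oneAddInv he c) = g c := by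
  conv_rhs => rw [← oneAddInv_add_apply he c, map_add, hg, add_zero]

theorem apply_oneAddInv_of_semiconj (he : e.IsLocallyNilpotent) {e' : N →+ N}
    (he' : e'.IsLocallyNilpotent) {g : M →+ N} (hg : ∀ x, g (e x) = e' (g x)) (c : M) :
    g (e.oneAddInv he c) = e'.oneAddInv he' (g c) := by
  rw [eq_comm, oneAddInv_eq_iff, ← hg, ← map_add, oneAddInv_add_apply]

theorem oneAddInv_eventually_eq_altGeomSum (he : e.IsLocallyNilpotent) (c : M) :
    ∃ N : ℕ, ∀ m ≥ N, e.oneAddInv he c = e.altGeomSum m c := by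
  obtain ⟨k, hk⟩ := he c
  refine ⟨k, fun m hm => ?_⟩
  obtain ⟨j, rfl⟩ := Nat.exists_eq_add_of_le hm
  rw [oneAddInv_eq_iff, altGeomSum_add_apply_altGeomSum, add_comm, Function.iterate_add_apply, hk,
    Function.iterate_fixed (map_zero e), smul_zero, sub_zero]

end AddMonoidHom

namespace ChCx

def IsPerturbation (C : ChCx) (δ : ∀ n, C.X (n + 1) →+ C.X n) : Prop :=
  ∀ n (c : C.X (n + 2)), (C.d n + δ n) ((C.d (n + 1) + δ (n + 1)) c) = 0

def perturb (C : ChCx) (δ : ∀ n, C.X (n + 1) →+ C.X n) (hδ : C.IsPerturbation δ) : ChCx :=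
  ⟨C.X, C.ab, fun n => C.d n + δ n, hδ⟩

variable {C : ChCx} {δ : ∀ n, C.X (n + 1) →+ C.X n}

theorem IsPerturbation.d_δ_eq (hδ : C.IsPerturbation δ) (n : ℕ) (c : C.X (n + 2)) :
    C.d n (δ (n + 1) c) = -δ n (C.d (n + 1) c) - δ n (δ (n + 1) c) := by
  have h := hδ n c
  rw [AddMonoidHom.add_apply, AddMonoidHom.add_apply, map_add, map_add, C.dd, zero_add] at h
  rw [eq_sub_iff_add_eq, eq_neg_iff_add_eq_zero, ← h]
  abel

theorem IsPerturbation.δ_d_eq (hδ : C.IsPerturbation δ) (n : ℕ) (c : C.X (n + 2)) :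
    δ n (C.d (n + 1) c) = -C.d n (δ (n + 1) c) - δ n (δ (n + 1) c) := by
  rw [hδ.d_δ_eq]
  abel

end ChCx

namespace Reduction

variable {C C' : ChCx} (R : Reduction C C')

theorem βα_zero (c : C.X 0) : R.β.f 0 (R.α.f 0 c) = c - C.d 0 (R.η 0 c) := by
  rw [R.hmt0, sub_sub_cancel]

theorem βα_succ (n : ℕ) (c : C.X (n + 1)) :
    R.β.f (n + 1) (R.α.f (n + 1) c) = c - C.d (n + 1) (R.η (n + 1) c) - R.η n (C.d n c) := by
  rw [sub_sub, R.hmt, sub_sub_cancel]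

variable (δ : ∀ n, C.X (n + 1) →+ C.X n) (hnil : ∀ n, ((R.η n).comp (δ n)).IsLocallyNilpotent)

noncomputable def φ : ∀ n, C.X n →+ C.X n
  | 0 => AddMonoidHom.id _
  | n + 1 => ((R.η n).comp (δ n)).oneAddInv (hnil n)

noncomputable def ψ (n : ℕ) : C.X n →+ C.X n :=
  ((δ n).comp (R.η n)).oneAddInv (hnil n).comp_comm

theorem φ_zero : R.φ δ hnil 0 = AddMonoidHom.id _ := rfl

theorem ηδφ_eq_sub (n : ℕ) (c : C.X (n + 1)) :
    R.η n (δ n (R.φ δ hnil (n + 1) c)) = c - R.φ δ hnil (n + 1) c :=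
  eq_sub_of_add_eq' (AddMonoidHom.oneAddInv_add_apply (hnil n) c)

theorem φηδ_eq_sub (n : ℕ) (c : C.X (n + 1)) :
    R.φ δ hnil (n + 1) (R.η n (δ n c)) = c - R.φ δ hnil (n + 1) c :=
  eq_sub_of_add_eq' (AddMonoidHom.oneAddInv_add_oneAddInv_apply (hnil n) c)

theorem δηψ_eq_sub (n : ℕ) (c : C.X n) : δ n (R.η n (R.ψ δ hnil n c)) = c - R.ψ δ hnil n c :=
  eq_sub_of_add_eq' (AddMonoidHom.oneAddInv_add_apply _ c)

theorem δφ_eq_ψδ (n : ℕ) (c : C.X (n + 1)) : δ n (R.φ δ hnil (n + 1) c) = R.ψ δ hnil n (δ n c) :=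
  AddMonoidHom.apply_oneAddInv_of_semiconj (hnil n) (hnil n).comp_comm (fun _ => rfl) c

theorem φη_eq_ηψ (n : ℕ) (c : C.X n) : R.φ δ hnil (n + 1) (R.η n c) = R.η n (R.ψ δ hnil n c) :=
  (AddMonoidHom.apply_oneAddInv_of_semiconj (hnil n).comp_comm (hnil n) (fun _ => rfl) c).symm

theorem ηφ_eq_η (n : ℕ) (c : C.X (n + 1)) : R.η (n + 1) (R.φ δ hnil (n + 1) c) = R.η (n + 1) c :=
  AddMonoidHom.apply_oneAddInv_of_comp_eq_zero (hnil n) (fun x => R.ηη n (δ n x)) c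

theorem ψβ_eq_β (n : ℕ) (c : C'.X n) : R.ψ δ hnil n (R.β.f n c) = R.β.f n c :=
  AddMonoidHom.oneAddInv_apply_of_apply_eq_zero _ <| by
    rw [AddMonoidHom.comp_apply, R.ηβ, map_zero]

theorem ψη_eq_η (n : ℕ) (c : C.X n) : R.ψ δ hnil (n + 1) (R.η n c) = R.η n c :=
  AddMonoidHom.oneAddInv_apply_of_apply_eq_zero _ <| by
    rw [AddMonoidHom.comp_apply, R.ηη, map_zero]

theorem φ_eq_sub (n : ℕ) (c : C.X (n + 1)) :
    R.φ δ hnil (n + 1) c = c - R.η n (δ n (R.φ δ hnil (n + 1) c)) := by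
  rw [ηδφ_eq_sub, sub_sub_cancel]

theorem ψ_eq_sub (n : ℕ) (c : C.X n) :
    R.ψ δ hnil n c = c - δ n (R.φ δ hnil (n + 1) (R.η n c)) := by
  rw [φη_eq_ηψ, δηψ_eq_sub, sub_sub_cancel]

theorem φβαδφ_eq_sub (hδ : C.IsPerturbation δ) (n : ℕ) (c : C.X (n + 1)) :
    R.φ δ hnil n (R.β.f n (R.α.f n (δ n (R.φ δ hnil (n + 1) c))))
      = C.d n (R.φ δ hnil (n + 1) c) + δ n (R.φ δ hnil (n + 1) c) - R.φ δ hnil n (C.d n c) := by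
  cases n with
  | zero =>
    simp only [φ_zero, AddMonoidHom.id_apply]
    rw [βα_zero, ηδφ_eq_sub, map_sub]
    abel
  | succ n =>
    rw [βα_succ, ηδφ_eq_sub, hδ.d_δ_eq]
    simp only [map_sub, map_neg]
    rw [φηδ_eq_sub, φηδ_eq_sub]
    abel

theorem ψ_d_add_δ_eq (hδ : C.IsPerturbation δ) (n : ℕ) (c : C.X (n + 1)) :
    R.ψ δ hnil n ((C.d n + δ n) c)
      = C.d n (R.ψ δ hnil (n + 1) c)
        + δ n (R.φ δ hnil (n + 1) (R.β.f (n + 1) (R.α.f (n + 1) (R.ψ δ hnil (n + 1) c)))) := by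
  rw [βα_succ]
  simp only [map_sub, AddMonoidHom.add_apply, map_add]
  rw [φη_eq_ηψ, δηψ_eq_sub, δφ_eq_ψδ, δφ_eq_ψδ, hδ.δ_d_eq, δηψ_eq_sub]
  simp only [map_sub, map_neg]
  abel

noncomputable def transferredPerturbation (n : ℕ) : C'.X (n + 1) →+ C'.X n :=
  (R.α.f n).comp ((δ n).comp ((R.φ δ hnil (n + 1)).comp (R.β.f (n + 1))))

theorem αψφβ_eq (n : ℕ) (c : C'.X n) :
    R.α.f n (R.ψ δ hnil n (R.φ δ hnil n (R.β.f n c))) = c := by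
  cases n with
  | zero => rw [φ_zero, AddMonoidHom.id_apply, ψβ_eq_β, R.αβ]
  | succ n => rw [φ_eq_sub, map_sub, map_sub, ψβ_eq_β, ψη_eq_η, R.αη, R.αβ, sub_zero]

theorem φβ_comm (hδ : C.IsPerturbation δ) (n : ℕ) (c : C'.X (n + 1)) :
    R.φ δ hnil n (R.β.f n ((C'.d n + R.transferredPerturbation δ hnil n) c))
      = (C.d n + δ n) (R.φ δ hnil (n + 1) (R.β.f (n + 1) c)) := by
  simp only [transferredPerturbation, AddMonoidHom.add_apply, AddMonoidHom.comp_apply, map_add]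
  rw [R.β.comm, φβαδφ_eq_sub R δ hnil hδ]
  abel

theorem isPerturbation_transferredPerturbation (hδ : C.IsPerturbation δ) :
    C'.IsPerturbation (R.transferredPerturbation δ hnil) := fun n c => by
  set D' := fun n => C'.d n + R.transferredPerturbation δ hnil n
  calc D' n (D' (n + 1) c)
      = R.α.f n (R.ψ δ hnil n (R.φ δ hnil n (R.β.f n (D' n (D' (n + 1) c))))) :=
        (αψφβ_eq ..).symm
    _ = R.α.f n (R.ψ δ hnil n ((C.d n + δ n) ((C.d (n + 1) + δ (n + 1))
          (R.φ δ hnil (n + 2) (R.β.f (n + 2) c))))) := by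
      rw [φβ_comm R δ hnil hδ, φβ_comm R δ hnil hδ]
    _ = 0 := by rw [hδ, map_zero, map_zero]

theorem αψ_comm (hδ : C.IsPerturbation δ) (n : ℕ) (c : C.X (n + 1)) :
    R.α.f n (R.ψ δ hnil n ((C.d n + δ n) c))
      = (C'.d n + R.transferredPerturbation δ hnil n) (R.α.f (n + 1) (R.ψ δ hnil (n + 1) c)) := by
  rw [ψ_d_add_δ_eq R δ hnil hδ, map_add, R.α.comm]
  rfl

theorem hmt0_perturbed (hδ : C.IsPerturbation δ) (c : C.X 0) :
    (C.d 0 + δ 0) (R.φ δ hnil 1 (R.η 0 c))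
      = c - R.φ δ hnil 0 (R.β.f 0 (R.α.f 0 (R.ψ δ hnil 0 c))) := by
  rw [AddMonoidHom.add_apply, ψ_eq_sub, map_sub, map_sub, map_sub, φβαδφ_eq_sub R δ hnil hδ,
    φ_zero, AddMonoidHom.id_apply, AddMonoidHom.id_apply, βα_zero]
  abel

theorem hmt_perturbed (hδ : C.IsPerturbation δ) (n : ℕ) (c : C.X (n + 1)) :
    (C.d (n + 1) + δ (n + 1)) (R.φ δ hnil (n + 2) (R.η (n + 1) c))
        + R.φ δ hnil (n + 1) (R.η n ((C.d n + δ n) c))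
      = c - R.φ δ hnil (n + 1) (R.β.f (n + 1) (R.α.f (n + 1) (R.ψ δ hnil (n + 1) c))) := by
  rw [ψ_eq_sub, map_sub, map_sub, map_sub, φβαδφ_eq_sub R δ hnil hδ, βα_succ]
  simp only [AddMonoidHom.add_apply, map_add, map_sub]
  rw [φηδ_eq_sub]
  abel

theorem φηφβ_eq_zero (n : ℕ) (c : C'.X n) :
    R.φ δ hnil (n + 1) (R.η n (R.φ δ hnil n (R.β.f n c))) = 0 := by
  cases n with
  | zero => rw [φ_zero, AddMonoidHom.id_apply, R.ηβ, map_zero]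
  | succ n => rw [ηφ_eq_η, R.ηβ, map_zero]

theorem αψφη_eq_zero (n : ℕ) (c : C.X n) :
    R.α.f (n + 1) (R.ψ δ hnil (n + 1) (R.φ δ hnil (n + 1) (R.η n c))) = 0 := by
  rw [φη_eq_ηψ, ψη_eq_η, R.αη]

theorem φηφη_eq_zero (n : ℕ) (c : C.X n) :
    R.φ δ hnil (n + 2) (R.η (n + 1) (R.φ δ hnil (n + 1) (R.η n c))) = 0 := by
  rw [ηφ_eq_η, R.ηη, map_zero]

noncomputable def perturbed (hδ : C.IsPerturbation δ) :
    Reduction (C.perturb δ hδ)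
      (C'.perturb (R.transferredPerturbation δ hnil)
        (R.isPerturbation_transferredPerturbation δ hnil hδ)) where
  α := ⟨fun n => (R.α.f n).comp (R.ψ δ hnil n), R.αψ_comm δ hnil hδ⟩
  β := ⟨fun n => (R.φ δ hnil n).comp (R.β.f n), R.φβ_comm δ hnil hδ⟩
  η n := (R.φ δ hnil (n + 1)).comp (R.η n)
  ηβ := R.φηφβ_eq_zero δ hnil
  αη := R.αψφη_eq_zero δ hnil
  αβ := R.αψφβ_eq δ hnil
  ηη := R.φηφη_eq_zero δ hnil
  hmt0 := R.hmt0_perturbed δ hnil hδ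
  hmt := R.hmt_perturbed δ hnil hδ

end Reduction

/-- Basic Perturbation Lemma. -/
theorem basic_perturbation_lemma (C C' : ChCx) (R : Reduction C C')
    (δ : ∀ n, C.X (n + 1) →+ C.X n)
    (hδ : ∀ n (c : C.X (n + 2)),
      (C.d n + δ n) ((C.d (n + 1) + δ (n + 1)) c) = 0)
    (hnil : ∀ n (c : C.X (n + 1)), ∃ i : ℕ,
      (fun x => R.η n (δ n x))^[i] c = 0) :
    ∃ φ ψ : ∀ n, C.X n →+ C.X n,
      -- `φ = Σ (−1)^i (ηδ)^i` (in degree 0 the operator `ηδ` vanishes)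
      (∀ c : C.X 0, φ 0 c = c) ∧
      (∀ n (c : C.X (n + 1)), ∃ N : ℕ, ∀ m ≥ N,
        φ (n + 1) c =
          ∑ i ∈ Finset.range m, ((-1 : ℤ) ^ i) • (fun x => R.η n (δ n x))^[i] c) ∧
      -- `ψ = Σ (−1)^i (δη)^i`
      (∀ n (c : C.X n), ∃ N : ℕ, ∀ m ≥ N,
        ψ n c =
          ∑ i ∈ Finset.range m, ((-1 : ℤ) ^ i) • (fun x => δ n (R.η n x))^[i] c) ∧
      -- `δ' = αδφβ` is a perturbation of `∂'` …
      ∃ hδ' : ∀ n (c : C'.X (n + 2)),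
          (C'.d n + (R.α.f n).comp ((δ n).comp ((φ (n + 1)).comp (R.β.f (n + 1)))))
            ((C'.d (n + 1) +
              (R.α.f (n + 1)).comp
                ((δ (n + 1)).comp ((φ (n + 2)).comp (R.β.f (n + 2))))) c) = 0,
        -- … and `(αψ, φβ, φη)` is a reduction `(C, ∂ + δ) ⇒ (C', ∂' + δ')`
        ∃ R' : Reduction
            { X := C.X, ab := C.ab, d := fun n => C.d n + δ n, dd := hδ }
            { X := C'.X, ab := C'.ab,
              d := fun n =>
                C'.d n + (R.α.f n).comp ((δ n).comp ((φ (n + 1)).comp (R.β.f (n + 1)))),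
              dd := hδ' },
          (∀ n (c : C.X n), R'.α.f n c = R.α.f n (ψ n c)) ∧
          (∀ n (c : C'.X n), R'.β.f n c = φ n (R.β.f n c)) ∧
          (∀ n (c : C.X n), R'.η n c = φ (n + 1) (R.η n c)) := by
  refine ⟨R.φ δ hnil, R.ψ δ hnil, fun _ => rfl,
    fun n => AddMonoidHom.oneAddInv_eventually_eq_altGeomSum (e := (R.η n).comp (δ n)) (hnil n),
    fun n => AddMonoidHom.oneAddInv_eventually_eq_altGeomSum (e := (δ n).comp (R.η n))
      (AddMonoidHom.IsLocallyNilpotent.comp_comm (hnil n)),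
    R.isPerturbation_transferredPerturbation δ hnil hδ, R.perturbed δ hnil hδ,
    fun _ _ => rfl, fun _ _ => rfl, fun _ _ => rfl⟩
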